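/- Optimal n-step belief values are attained by observation-based policies: in a POMDP with reward function R and observable goal set G, for every n ∈ ℕ and every belief b over S with an observation, there exists an observation-based policy σ with V_n(b) = V_n^σ(b); consequently V_n(b) = sup over all observation-based policies σ of V_n^σ(b). -/

import Mathlib

open Finset

attribute [local instance] Classical.propDecidable

noncomputable section

/-- A belief over a finite type `S`: a nonnegative function summing to one. -/
def IsBelief {S : Type} [Fintype S] (b : S → ℝ) : Prop :=
  (∀ s, 0 ≤ b s) ∧ (∑ s, b s = 1)

/-- A belief clip for a belief `b`: `0 ≤ μ(s) ≤ b(s)` pointwise and `Σμ < 1`. -/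
def IsBeliefClip {S : Type} [Fintype S] (b μ : S → ℝ) : Prop :=
  (∀ s, 0 ≤ μ s ∧ μ s ≤ b s) ∧ (∑ s, μ s < 1)

/-- The induced function `b ⊖ μ`, defined by `(b ⊖ μ)(s) = (b(s) − μ(s)) / (1 − Σμ)`. -/
def clipped {S : Type} [Fintype S] (b μ : S → ℝ) : S → ℝ :=
  fun s => (b s - μ s) / (1 - ∑ s', μ s')

variable {S Act Z : Type}

/-- The set of actions enabled in state `s`: those whose outgoing probabilities sum to 1. -/
def enabledA [Fintype S] [Fintype Act] (P : S → Act → S → ℝ) (s : S) : Finset Act :=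
  univ.filter fun α => ∑ s' : S, P s α s' = 1

/-- The actions enabled at an observation `z`: `Act(z) = Act(s)` for some `s` with `O s = z`. -/
def obsEnabled [Fintype S] [Fintype Act] (O : S → Z) (P : S → Act → S → ℝ) (z : Z) :
    Finset Act :=
  if h : ∃ s, O s = z then enabledA P h.choose else ∅

/-- The POMDP assumptions on the observation function `O` and the transition function `P`:
nonnegative transition probabilities, each state-action row sums to 0 or 1, every state has
some enabled action, and equally-observed states have equal enabled actions. -/
def IsPOMDP [Fintype S] [Fintype Act] (O : S → Z) (P : S → Act → S → ℝ) : Prop :=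
  (∀ s α s', 0 ≤ P s α s') ∧
  (∀ s α, (∑ s', P s α s') = 0 ∨ (∑ s', P s α s') = 1) ∧
  (∀ s, (enabledA P s).Nonempty) ∧
  (∀ s s', O s = O s' → enabledA P s = enabledA P s')

/-- `b` has observation `z`: the support of `b` is contained in `O⁻¹(z)`. -/
def HasObs (O : S → Z) (b : S → ℝ) (z : Z) : Prop :=
  ∀ s, 0 < b s → O s = z

/-- `P(s,α,z)`: probability to observe `z` after taking `α` in state `s`. -/
def Pso [Fintype S] (O : S → Z) (P : S → Act → S → ℝ) (s : S) (α : Act) (z : Z) : ℝ :=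
  ∑ s' : S, if O s' = z then P s α s' else 0

/-- `P(b,α,z)`: probability to observe `z` after taking `α` in belief `b`. -/
def Pbo [Fintype S] (O : S → Z) (P : S → Act → S → ℝ) (b : S → ℝ) (α : Act) (z : Z) : ℝ :=
  ∑ s : S, b s * Pso O P s α z

/-- The successor belief `⟦b|α,z⟧`. -/
def succB [Fintype S] (O : S → Z) (P : S → Act → S → ℝ) (b : S → ℝ) (α : Act) (z : Z) :
    S → ℝ :=
  fun s => if O s = z then (∑ s' : S, b s' * P s' α s) / Pbo O P b α z else 0

/-- The belief reward `R(b,α,z)`. -/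
def Rbel [Fintype S] (O : S → Z) (P R : S → Act → S → ℝ) (b : S → ℝ) (α : Act) (z : Z) : ℝ :=
  (∑ s : S, b s * ∑ s' : S, if O s' = z then R s α s' * P s α s' else 0) / Pbo O P b α z

/-- The last observation of a finite observation trace `z₀ α₁ z₁ … αₙ zₙ`,
represented as the pair of `z₀` and the list `[(α₁,z₁),…,(αₙ,zₙ)]`. -/
def lastObs (τ : Z × List (Act × Z)) : Z :=
  (τ.2.getLast?.map Prod.snd).getD τ.1

/-- An observation-based policy: to each finite observation trace it assigns a probability
distribution over actions supported on the actions enabled at the last observation. -/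
def IsObsPolicy [Fintype S] [Fintype Act] (O : S → Z) (P : S → Act → S → ℝ)
    (σ : Z × List (Act × Z) → Act → ℝ) : Prop :=
  ∀ τ, (∀ α, 0 ≤ σ τ α) ∧ (∑ α, σ τ α = 1) ∧
    (∀ α, σ τ α ≠ 0 → ∀ s, O s = lastObs τ → α ∈ enabledA P s)

/-- The shifted policy `σ⇝(z,α)`, behaving as `σ` after observing `z` and taking `α`. -/
def shiftPol (σ : Z × List (Act × Z) → Act → ℝ) (z : Z) (α : Act) :
    Z × List (Act × Z) → Act → ℝ :=
  fun τ => σ (z, (α, τ.1) :: τ.2)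

/-- Goal states are observable: membership in `G` is determined by the observation. -/
def ObservableGoal (O : S → Z) (G : Set S) : Prop :=
  ∃ Z' : Set Z, ∀ s, s ∈ G ↔ O s ∈ Z'

/-- The `n`-step state values `W_n^σ` under an observation-based policy `σ`. -/
def Wval [Fintype S] [Fintype Act] (O : S → Z) (P R : S → Act → S → ℝ) (G : Set S) :
    ℕ → (Z × List (Act × Z) → Act → ℝ) → S → ℝ
  | 0, _, _ => 0
  | n+1, σ, s =>
    if s ∈ G then 0
    else ∑ α ∈ enabledA P s, σ (O s, []) α *
      ∑ s' : S, P s α s' * (R s α s' + Wval O P R G n (shiftPol σ (O s) α) s')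

/-- The `n`-step belief values `V_n^σ(b)` under policy `σ`, for a belief `b` with
observation `z`. -/
def Vpol [Fintype S] [Fintype Act] [Fintype Z] (O : S → Z) (P R : S → Act → S → ℝ)
    (G : Set S) :
    ℕ → (Z × List (Act × Z) → Act → ℝ) → (S → ℝ) → Z → ℝ
  | 0, _, _, _ => 0
  | n+1, σ, b, z =>
    if ∀ s, 0 < b s → s ∈ G then 0
    else ∑ α ∈ obsEnabled O P z, σ (z, []) α *
      ∑ z' ∈ univ.filter (fun z' => 0 < Pbo O P b α z'),
        Pbo O P b α z' *
          (Rbel O P R b α z' + Vpol O P R G n (shiftPol σ z α) (succB O P b α z') z')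

/-- Maximum of `f` over a finite set (0 for the empty set). -/
def maxOver {α : Type} (t : Finset α) (f : α → ℝ) : ℝ :=
  if h : t.Nonempty then t.sup' h f else 0

/-- Minimum of `f` over a finite set (0 for the empty set). -/
def minOver {α : Type} (t : Finset α) (f : α → ℝ) : ℝ :=
  if h : t.Nonempty then t.inf' h f else 0

/-- The `n`-step optimal belief values `V_n(b)`, for a belief `b` with observation `z`. -/
def Vopt [Fintype S] [Fintype Act] [Fintype Z] (O : S → Z) (P R : S → Act → S → ℝ)
    (G : Set S) :
    ℕ → (S → ℝ) → Z → ℝ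
  | 0, _, _ => 0
  | n+1, b, z =>
    if ∀ s, 0 < b s → s ∈ G then 0
    else maxOver (obsEnabled O P z) fun α =>
      ∑ z' ∈ univ.filter (fun z' => 0 < Pbo O P b α z'),
        Pbo O P b α z' * (Rbel O P R b α z' + Vopt O P R G n (succB O P b α z') z')

/-- The `n`-step minimal values `U_n` on the underlying fully observable MDP. -/
def Umin [Fintype S] [Fintype Act] (P R : S → Act → S → ℝ) (G : Set S) : ℕ → S → ℝ
  | 0, _ => 0
  | n+1, s =>
    if s ∈ G then 0
    else minOver (enabledA P s) fun α =>
      ∑ s' : S, P s α s' * (R s α s' + Umin P R G n s')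

end

/-! `V_{n+1}(b)` is the maximum over enabled actions of the Q-values of `b`, so the
deterministic policy that tracks the successor belief along the trace and always plays a
maximizing action attains `V_n`. Conversely, a policy plays a convex combination of enabled
actions at the root, whose Q-values under the policy are by induction at most the optimal ones,
so `V_n^σ ≤ V_n`. Hence `V_n` is the greatest policy value. -/

section Argmax

variable {α : Type} [Nonempty α]

/-- A maximizer of `f` on `t`; an arbitrary element if `t` is empty. -/
noncomputable def argmaxOn (t : Finset α) (f : α → ℝ) : α :=
  if h : t.Nonempty then (t.exists_max_image f h).choose else Classical.arbitrary α

variable {t : Finset α} {f : α → ℝ}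

lemma argmaxOn_mem (h : t.Nonempty) : argmaxOn t f ∈ t := by
  rw [argmaxOn, dif_pos h]
  exact (t.exists_max_image f h).choose_spec.1

lemma maxOver_eq_argmaxOn (h : t.Nonempty) : maxOver t f = f (argmaxOn t f) := by
  rw [maxOver, dif_pos h]
  refine le_antisymm (Finset.sup'_le h f fun a ha => ?_) (Finset.le_sup' f (argmaxOn_mem h))
  rw [argmaxOn, dif_pos h]
  exact (t.exists_max_image f h).choose_spec.2 a ha

end Argmax

lemma sum_mul_le_maxOver {α : Type} {t : Finset α} {w f : α → ℝ} (hw : ∀ a ∈ t, 0 ≤ w a)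
    (hw1 : ∑ a ∈ t, w a = 1) : ∑ a ∈ t, w a * f a ≤ maxOver t f := by
  have ht : t.Nonempty := Finset.nonempty_of_sum_ne_zero (by rw [hw1]; exact one_ne_zero)
  rw [maxOver, dif_pos ht]
  calc ∑ a ∈ t, w a * f a ≤ ∑ a ∈ t, w a * t.sup' ht f :=
        Finset.sum_le_sum fun a ha => mul_le_mul_of_nonneg_left (Finset.le_sup' f ha) (hw a ha)
    _ = t.sup' ht f := by rw [← Finset.sum_mul, hw1, one_mul]

noncomputable section

variable {S Act Z : Type}

lemma lastObs_cons (z₀ z₁ : Z) (α : Act) (l : List (Act × Z)) :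
    lastObs (z₀, (α, z₁) :: l) = lastObs (z₁, l) := by
  cases l with
  | nil => rfl
  | cons p l =>
    simp only [lastObs, List.getLast?_cons_cons]
    cases h : (p :: l).getLast? <;> simp_all

variable [Fintype S] [Fintype Act] {O : S → Z} {P : S → Act → S → ℝ}

lemma obsEnabled_eq_enabledA (hM : IsPOMDP O P) {s : S} :
    obsEnabled O P (O s) = enabledA P s := by
  have h : ∃ s', O s' = O s := ⟨s, rfl⟩
  rw [obsEnabled, dif_pos h]
  exact hM.2.2.2 _ _ h.choose_spec

lemma succB_nonneg (hM : IsPOMDP O P) {b : S → ℝ} (hb : ∀ s, 0 ≤ b s) (α : Act) (z : Z)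
    (s : S) : 0 ≤ succB O P b α z s := by
  have hPso : ∀ s, 0 ≤ Pso O P s α z := fun s =>
    Finset.sum_nonneg fun s' _ => by split_ifs <;> simp [hM.1 s α s']
  unfold succB
  split_ifs
  · exact div_nonneg (Finset.sum_nonneg fun s' _ => mul_nonneg (hb s') (hM.1 s' α s))
      (Finset.sum_nonneg fun s _ => mul_nonneg (hb s) (hPso s))
  · exact le_rfl

lemma IsObsPolicy.shiftPol {σ : Z × List (Act × Z) → Act → ℝ} (hσ : IsObsPolicy O P σ)
    (z : Z) (α : Act) : IsObsPolicy O P (shiftPol σ z α) := by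
  intro τ
  obtain ⟨hnonneg, hsum, hsupp⟩ := hσ (z, (α, τ.1) :: τ.2)
  rw [lastObs_cons] at hsupp
  exact ⟨hnonneg, hsum, hsupp⟩

lemma IsObsPolicy.sum_obsEnabled {σ : Z × List (Act × Z) → Act → ℝ} (hM : IsPOMDP O P)
    (hσ : IsObsPolicy O P σ) (s : S) :
    ∑ α ∈ obsEnabled O P (O s), σ (O s, []) α = 1 := by
  obtain ⟨-, hsum, hsupp⟩ := hσ (O s, [])
  rw [← hsum]
  refine Finset.sum_subset (Finset.subset_univ _) fun α _ hα => ?_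
  by_contra hne
  exact hα (obsEnabled_eq_enabledA hM ▸ hsupp α hne s rfl)

variable [Fintype Z] (O P) (R : S → Act → S → ℝ) (G : Set S)

def qVal (n : ℕ) (b : S → ℝ) (α : Act) : ℝ :=
  ∑ z' ∈ univ.filter (fun z' => 0 < Pbo O P b α z'),
    Pbo O P b α z' * (Rbel O P R b α z' + Vopt O P R G n (succB O P b α z') z')

lemma Vopt_succ (n : ℕ) (b : S → ℝ) (z : Z) :
    Vopt O P R G (n + 1) b z =
      if ∀ s, 0 < b s → s ∈ G then 0 else maxOver (obsEnabled O P z) (qVal O P R G n b) :=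
  rfl

/-- The greedy policy for horizon `n` from belief `b`. The horizon `n - 1` truncates at `0`;
past the horizon the action played is irrelevant, it only has to be enabled. -/
def greedyPol [Nonempty Act] (n : ℕ) (b : S → ℝ) : Z × List (Act × Z) → Act → ℝ
  | (z₀, []) => Pi.single (argmaxOn (obsEnabled O P z₀) (qVal O P R G (n - 1) b)) 1
  | (_, (α, z₁) :: l) => greedyPol (n - 1) (succB O P b α z₁) (z₁, l)

variable {O P R G}

lemma isObsPolicy_greedyPol [Nonempty Act] (hM : IsPOMDP O P) (n : ℕ) (b : S → ℝ) :
    IsObsPolicy O P (greedyPol O P R G n b) := by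
  rintro ⟨z₀, l⟩
  induction l generalizing n b z₀ with
  | nil =>
    refine ⟨fun α => ?_, by simp [greedyPol], fun α hα s hs => ?_⟩
    · rw [greedyPol, Pi.single_apply]; split_ifs <;> norm_num
    · have hα : α = argmaxOn (obsEnabled O P z₀) (qVal O P R G (n - 1) b) := by
        by_contra hne
        simp [greedyPol, hne] at hα
      subst hα hs
      rw [← obsEnabled_eq_enabledA hM]
      exact argmaxOn_mem (obsEnabled_eq_enabledA hM ▸ hM.2.2.1 s)
  | cons p l ih =>
    obtain ⟨α, z₁⟩ := p
    rw [greedyPol, lastObs_cons]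
    exact ih _ _ z₁

lemma Vpol_congr_policy (n : ℕ) {σ σ' : Z × List (Act × Z) → Act → ℝ} (b : S → ℝ) {z : Z}
    (h : ∀ l, σ (z, l) = σ' (z, l)) : Vpol O P R G n σ b z = Vpol O P R G n σ' b z := by
  induction n generalizing σ σ' b z with
  | zero => rfl
  | succ n ih =>
    simp only [Vpol]
    refine if_congr Iff.rfl rfl (Finset.sum_congr rfl fun α _ => ?_)
    have hshift : shiftPol σ z α = shiftPol σ' z α := funext fun τ => h ((α, τ.1) :: τ.2)
    rw [h [], hshift]

lemma Vpol_le_Vopt (hM : IsPOMDP O P) (n : ℕ) {σ : Z × List (Act × Z) → Act → ℝ}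
    (hσ : IsObsPolicy O P σ) {b : S → ℝ} (hb : ∀ s, 0 ≤ b s) (z : Z) :
    Vpol O P R G n σ b z ≤ Vopt O P R G n b z := by
  induction n generalizing σ b z with
  | zero => exact le_rfl
  | succ n ih =>
    rw [Vpol, Vopt_succ]
    split_ifs with hG
    · exact le_rfl
    by_cases hz : ∃ s, O s = z
    · obtain ⟨s, rfl⟩ := hz
      refine le_trans (Finset.sum_le_sum fun α _ => mul_le_mul_of_nonneg_left ?_
        ((hσ _).1 α)) (sum_mul_le_maxOver (fun α _ => (hσ _).1 α) (hσ.sum_obsEnabled hM s))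
      refine Finset.sum_le_sum fun z' hz' => mul_le_mul_of_nonneg_left ?_ ?_
      · exact add_le_add le_rfl (ih (hσ.shiftPol _ α) (succB_nonneg hM hb α z') z')
      · exact (Finset.mem_filter.1 hz').2.le
    · simp [obsEnabled, hz, maxOver]

lemma Vopt_eq_Vpol_greedyPol [Nonempty Act] (n : ℕ) (b : S → ℝ) (z : Z) :
    Vopt O P R G n b z = Vpol O P R G n (greedyPol O P R G n b) b z := by
  induction n generalizing b z with
  | zero => rfl
  | succ n ih =>
    rw [Vpol, Vopt_succ]
    refine if_congr Iff.rfl rfl ?_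
    by_cases hz : (obsEnabled O P z).Nonempty
    · have hroot : greedyPol O P R G (n + 1) b (z, []) =
          Pi.single (argmaxOn (obsEnabled O P z) (qVal O P R G n b)) 1 := by
        rw [greedyPol]; rfl
      simp only [hroot, Pi.single_apply, ite_mul, one_mul, zero_mul, Finset.sum_ite_eq',
        if_pos (argmaxOn_mem hz), maxOver_eq_argmaxOn hz, qVal]
      refine Finset.sum_congr rfl fun z' _ => ?_
      rw [ih]
      congr 2
      exact Vpol_congr_policy n _ fun l => by rw [shiftPol, greedyPol]; rfl
    · simp [Finset.not_nonempty_iff_eq_empty.1 hz, maxOver]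

end

theorem stmt_18_general {S Act Z : Type} [Fintype S] [Fintype Act] [Nonempty Act]
    [Fintype Z]
    (O : S → Z) (P : S → Act → S → ℝ) (hM : IsPOMDP O P)
    (R : S → Act → S → ℝ) (G : Set S) (n : ℕ)
    (b : S → ℝ) (z : Z) (hb : IsBelief b) :
    (∃ σ : Z × List (Act × Z) → Act → ℝ, IsObsPolicy O P σ ∧
      Vopt O P R G n b z = Vpol O P R G n σ b z) ∧
    Vopt O P R G n b z =
      sSup {x : ℝ | ∃ σ : Z × List (Act × Z) → Act → ℝ,
        IsObsPolicy O P σ ∧ x = Vpol O P R G n σ b z} := by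
  have hattained : ∃ σ, IsObsPolicy O P σ ∧ Vopt O P R G n b z = Vpol O P R G n σ b z :=
    ⟨greedyPol O P R G n b, isObsPolicy_greedyPol hM n b, Vopt_eq_Vpol_greedyPol n b z⟩
  have hgreatest : IsGreatest {x : ℝ | ∃ σ : Z × List (Act × Z) → Act → ℝ,
      IsObsPolicy O P σ ∧ x = Vpol O P R G n σ b z} (Vopt O P R G n b z) := by
    refine ⟨hattained, ?_⟩
    rintro x ⟨σ, hσ, rfl⟩
    exact Vpol_le_Vopt hM n hσ hb.1 z
  exact ⟨hattained, hgreatest.csSup_eq.symm⟩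

/-- optimal `n`-step belief values are attained by observation-based
policies, and hence equal the supremum over all observation-based policies. -/
theorem stmt_18 {S Act Z : Type} [Fintype S] [Nonempty S] [Fintype Act] [Nonempty Act]
    [Fintype Z] [Nonempty Z]
    (O : S → Z) (P : S → Act → S → ℝ) (hM : IsPOMDP O P)
    (R : S → Act → S → ℝ) (G : Set S) (hG : ObservableGoal O G) (n : ℕ)
    (b : S → ℝ) (z : Z) (hb : IsBelief b) (hobs : HasObs O b z) :
    (∃ σ : Z × List (Act × Z) → Act → ℝ, IsObsPolicy O P σ ∧
      Vopt O P R G n b z = Vpol O P R G n σ b z) ∧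
    Vopt O P R G n b z =
      sSup {x : ℝ | ∃ σ : Z × List (Act × Z) → Act → ℝ,
        IsObsPolicy O P σ ∧ x = Vpol O P R G n σ b z} :=
  stmt_18_general O P hM R G n b z hb
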